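/- arXiv:1202.4876 — 3 statements merged into one kernel-verified Lean document; each statement's English description precedes it below -/
import Mathlib

section
/- Let E ⊆ (0,T) be a measurable set of positive measure and let l ∈ (0,T) be a Lebesgue density point of E. Then for each z > 1 there exists l₁ ∈ (l, T) such that the sequence defined by l_{m+1} = l + z^{-m}(l₁ - l) for m ≥ 1 satisfies |E ∩ (l_{m+1}, l_m)| ≥ (1/3)(l_m - l_{m+1}) for all m ≥ 1. -/
open MeasureTheory Set Filter

/-- at a Lebesgue density point `l` of a measurable set `E ⊆ (0,T)`,
for each `z > 1` one can pick `l₁ ∈ (l,T)` so that the geometric sequence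
`l_m = l + z^{-(m-1)}(l₁ - l)` satisfies `|E ∩ (l_{m+1}, l_m)| ≥ (l_m - l_{m+1})/3`. -/
theorem stmt_1 (T : ℝ) (hT : 0 < T) (E : Set ℝ) (hE : MeasurableSet E)
    (hET : E ⊆ Ioo 0 T) (hEpos : 0 < volume E)
    (l : ℝ) (hl : l ∈ Ioo 0 T)
    (hdensity : Tendsto
      (fun r : ℝ => volume (E ∩ Ioo (l - r) (l + r)) / ENNReal.ofReal (2 * r))
      (nhdsWithin 0 (Ioi 0)) (nhds 1)) :
    ∀ z : ℝ, 1 < z → ∃ l₁ ∈ Ioo l T,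
      ∀ m : ℕ, 1 ≤ m →
        ENNReal.ofReal (((l + (l₁ - l) / z ^ (m - 1)) - (l + (l₁ - l) / z ^ m)) / 3)
          ≤ volume (E ∩ Ioo (l + (l₁ - l) / z ^ m) (l + (l₁ - l) / z ^ (m - 1))) := by
  intro z hz
  have hz0 : (0:ℝ) < z := lt_trans one_pos hz
  have hinv : 1 / z < 1 := by rw [div_lt_one hz0]; exact hz
  have hinv0 : 0 < 1 / z := by positivity
  set ε : ℝ := (1 - 1 / z) / 3 with hεdef
  have hε : 0 < ε := by unfold ε; linarith
  have hε1 : ε < 1 := by unfold ε; linarith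
  have hc : ENNReal.ofReal (1 - ε) < 1 := by
    rw [ENNReal.ofReal_lt_one]; linarith
  have hev : ∀ᶠ r in nhdsWithin 0 (Ioi 0),
      ENNReal.ofReal (1 - ε) <
        volume (E ∩ Ioo (l - r) (l + r)) / ENNReal.ofReal (2 * r) :=
    hdensity.eventually (eventually_gt_nhds hc)
  obtain ⟨u, hu, hsub⟩ := mem_nhdsGT_iff_exists_Ioo_subset.mp hev
  have hu0 : 0 < u := hu
  set δ : ℝ := min (u / 2) ((T - l) / 2) with hδdef
  have hδ0 : 0 < δ := by
    apply lt_min (by linarith)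
    have := hl.2; linarith
  refine ⟨l + δ, ⟨by linarith, ?_⟩, ?_⟩
  · have h1 : δ ≤ (T - l) / 2 := min_le_right _ _
    linarith
  intro m hm
  have hll : l + δ - l = δ := by ring
  rw [hll]
  set r : ℝ := δ / z ^ (m - 1) with hrdef
  have hzp : (0:ℝ) < z ^ (m - 1) := pow_pos hz0 _
  have hzp1 : (1:ℝ) ≤ z ^ (m - 1) := one_le_pow₀ hz.le
  have hr0 : 0 < r := div_pos hδ0 hzp
  have hru : r < u := by
    have h1 : r ≤ δ := div_le_self hδ0.le hzp1
    have h2 : δ ≤ u / 2 := min_le_left _ _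
    linarith
  have hzm : z ^ m = z ^ (m - 1) * z := by
    conv_lhs => rw [← Nat.sub_add_cancel hm]
    rw [pow_succ]
  have hrz : δ / z ^ m = r / z := by
    rw [hzm, hrdef, div_div]
  rw [hrz]
  -- density bound at r
  have hP := hsub ⟨hr0, hru⟩
  have h2r : (0:ℝ) < 2 * r := by linarith
  have hvol : ENNReal.ofReal ((1 - ε) * (2 * r)) ≤
      volume (E ∩ Ioo (l - r) (l + r)) := by
    rw [ENNReal.ofReal_mul (by linarith)]
    rw [← ENNReal.le_div_iff_mul_le
      (Or.inl (ENNReal.ofReal_pos.mpr h2r).ne')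
      (Or.inl ENNReal.ofReal_ne_top)]
    exact hP.le
  -- subset estimate
  have hsubset : E ∩ Ioo (l - r) (l + r) ⊆
      (E ∩ Ioo (l + r / z) (l + r)) ∪ Ioc (l - r) (l + r / z) := by
    rintro x ⟨hxE, hx1, hx2⟩
    by_cases hx : l + r / z < x
    · exact Or.inl ⟨hxE, hx, hx2⟩
    · exact Or.inr ⟨hx1, not_lt.mp hx⟩
  have hmeas : volume (E ∩ Ioo (l - r) (l + r)) ≤
      volume (E ∩ Ioo (l + r / z) (l + r)) + ENNReal.ofReal (r + r / z) := by
    calc volume (E ∩ Ioo (l - r) (l + r))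
        ≤ volume ((E ∩ Ioo (l + r / z) (l + r)) ∪ Ioc (l - r) (l + r / z)) :=
          measure_mono hsubset
      _ ≤ volume (E ∩ Ioo (l + r / z) (l + r)) + volume (Ioc (l - r) (l + r / z)) :=
          measure_union_le _ _
      _ = volume (E ∩ Ioo (l + r / z) (l + r)) + ENNReal.ofReal (r + r / z) := by
          rw [Real.volume_Ioc]; ring_nf
  -- combine
  have hkey : ENNReal.ofReal ((l + r - (l + r / z)) / 3) + ENNReal.ofReal (r + r / z)
      ≤ volume (E ∩ Ioo (l + r / z) (l + r)) + ENNReal.ofReal (r + r / z) := by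
    calc ENNReal.ofReal ((l + r - (l + r / z)) / 3) + ENNReal.ofReal (r + r / z)
        = ENNReal.ofReal ((l + r - (l + r / z)) / 3 + (r + r / z)) := by
          have hrz2 : r / z ≤ r := div_le_self hr0.le hz.le
          have hrz3 : 0 < r / z := by positivity
          exact (ENNReal.ofReal_add (by linarith) (by linarith)).symm
      _ = ENNReal.ofReal ((1 - ε) * (2 * r)) := by
          congr 1
          unfold ε
          field_simp
          ring
      _ ≤ volume (E ∩ Ioo (l - r) (l + r)) := hvol
      _ ≤ volume (E ∩ Ioo (l + r / z) (l + r)) + ENNReal.ofReal (r + r / z) := hmeas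
  have := (ENNReal.add_le_add_iff_right ENNReal.ofReal_ne_top).mp hkey
  convert this using 3 <;> ring
end

section
/- Let θ ∈ (0,1), N ≥ 1, and let a₁, a₂ ≥ 0, b ≥ 0, h > 0 satisfy a₂ ≤ ε a₁ + ε^{−(1−θ)/θ} N e^{N/h} b for all ε > 0. Then for every q ≥ (N+1−θ)/(N+1), e^{−(N+1−θ)/h} a₂ − e^{−(N+1−θ)/(q h)} a₁ ≤ N b. -/
/-! Take `ε = e^{-θ/h}` in the hypothesis: then `ε^{-(1-θ)/θ} e^{N/h} = e^{(N+1-θ)/h}`, so after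
multiplying by `e^{-(N+1-θ)/h}` the `b`-term is exactly `N b` and the `a₁`-term carries
`e^{-(N+1)/h}`, which the condition on `q` bounds by `e^{-(N+1-θ)/(q h)}`. -/

open Real

lemma exp_neg_mul_le_of_forall_le_add_rpow {a₁ a₂ b N θ h : ℝ} (hθ : θ ≠ 0)
    (hmain : ∀ ε : ℝ, 0 < ε →
      a₂ ≤ ε * a₁ + ε ^ (-(1 - θ) / θ) * N * exp (N / h) * b) :
    exp (-(N + 1 - θ) / h) * a₂ ≤ exp (-(N + 1) / h) * a₁ + N * b := by
  have hε := hmain (exp (-θ / h)) (exp_pos _)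
  rw [← exp_mul, show -θ / h * (-(1 - θ) / θ) = (1 - θ) / h by field_simp] at hε
  calc exp (-(N + 1 - θ) / h) * a₂
      ≤ exp (-(N + 1 - θ) / h) * (exp (-θ / h) * a₁ + exp ((1 - θ) / h) * N * exp (N / h) * b) :=
        mul_le_mul_of_nonneg_left hε (exp_pos _).le
    _ = exp (-(N + 1 - θ) / h + -θ / h) * a₁
          + exp (-(N + 1 - θ) / h + (1 - θ) / h + N / h) * (N * b) := by
        simp only [exp_add]; ring
    _ = exp (-(N + 1) / h) * a₁ + exp 0 * (N * b) := by congr 3 <;> ring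
    _ = exp (-(N + 1) / h) * a₁ + N * b := by rw [exp_zero, one_mul]

lemma exp_neg_div_le_exp_neg_div_mul {A B h q : ℝ} (hh : 0 < h) (hA : 0 < A) (hB : 0 < B)
    (hq : B / A ≤ q) :
    exp (-A / h) ≤ exp (-B / (q * h)) := by
  have hq0 : 0 < q := (div_pos hB hA).trans_le hq
  have hBq : B / q ≤ A := (div_le_iff₀ hq0).mpr (by rwa [div_le_iff₀ hA, mul_comm] at hq)
  rw [exp_le_exp, neg_div, neg_div, neg_le_neg_iff, ← div_div]
  exact div_le_div_of_nonneg_right hBq hh.le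

theorem stmt_7_general (a₁ a₂ b N θ h : ℝ)
    (ha₁ : 0 ≤ a₁) (hN : 1 ≤ N)
    (hθ : θ ∈ Set.Ioo (0 : ℝ) 1) (hh : 0 < h)
    (hmain : ∀ ε : ℝ, 0 < ε →
      a₂ ≤ ε * a₁ + ε ^ (-(1 - θ) / θ) * N * Real.exp (N / h) * b) :
    ∀ q : ℝ, (N + 1 - θ) / (N + 1) ≤ q →
      Real.exp (-(N + 1 - θ) / h) * a₂ - Real.exp (-(N + 1 - θ) / (q * h)) * a₁
        ≤ N * b := by
  intro q hq
  obtain ⟨hθ0, hθ1⟩ := hθ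
  have hbound := exp_neg_mul_le_of_forall_le_add_rpow hθ0.ne' hmain
  have hexp := exp_neg_div_le_exp_neg_div_mul hh (by linarith) (by linarith) hq
  linarith [mul_le_mul_of_nonneg_right hexp ha₁]

/-- the telescoping-ready inequality: if
`a₂ ≤ ε a₁ + ε^{−(1−θ)/θ} N e^{N/h} b` for all `ε > 0`, then for every
`q ≥ (N+1−θ)/(N+1)` one has `e^{−(N+1−θ)/h} a₂ − e^{−(N+1−θ)/(qh)} a₁ ≤ N b`. -/
theorem stmt_7 (a₁ a₂ b N θ h : ℝ)
    (ha₁ : 0 ≤ a₁) (ha₂ : 0 ≤ a₂) (hb : 0 ≤ b) (hN : 1 ≤ N)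
    (hθ : θ ∈ Set.Ioo (0 : ℝ) 1) (hh : 0 < h)
    (hmain : ∀ ε : ℝ, 0 < ε →
      a₂ ≤ ε * a₁ + ε ^ (-(1 - θ) / θ) * N * Real.exp (N / h) * b) :
    ∀ q : ℝ, (N + 1 - θ) / (N + 1) ≤ q →
      Real.exp (-(N + 1 - θ) / h) * a₂ - Real.exp (-(N + 1 - θ) / (q * h)) * a₁
        ≤ N * b :=
  stmt_7_general a₁ a₂ b N θ h ha₁ hN hθ hh hmain
end

section
/- Let Ω ⊆ ℝⁿ be a bounded Lipschitz domain whose boundary near a point p is the graph of a Lipschitz function φ with constant m, in coordinates where p = 0 and Ω lies above the graph. Suppose that liminf over q ∈ ∂Ω, q → p of (q−p)·ν_q/|q−p| ≥ 0 (lower C¹ condition at p). Then there exist x_p ∈ Ω and r_p > 0 with |p − x_p| < r_p such that (q − x_p)·ν_q ≥ 0 for a.e. q ∈ B_{r_p}(x_p) ∩ ∂Ω, i.e. B_{r_p}(x_p) ∩ Ω is star-shaped with center x_p. -/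
open MeasureTheory Set

/-- The point `(x', φ(x'))` on the graph of `φ`. -/
noncomputable def graphPt {n : ℕ} (φ : EuclideanSpace ℝ (Fin n) → ℝ)
    (x' : EuclideanSpace ℝ (Fin n)) : EuclideanSpace ℝ (Fin (n + 1)) :=
  WithLp.toLp 2 (Fin.snoc (α := fun _ => ℝ) x'.ofLp (φ x'))

/-- The outward unit normal `(∇φ(x'), −1)/√(1+|∇φ(x')|²)` at a differentiability
point of the graph of `φ` (the domain lying above the graph). -/
noncomputable def graphNormal {n : ℕ} (φ : EuclideanSpace ℝ (Fin n) → ℝ)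
    (x' : EuclideanSpace ℝ (Fin n)) : EuclideanSpace ℝ (Fin (n + 1)) :=
  (Real.sqrt (1 + ‖gradient φ x'‖ ^ 2))⁻¹ •
    (WithLp.toLp 2 (Fin.snoc (α := fun _ => ℝ) (fun i => gradient φ x' i) (-1)) : EuclideanSpace ℝ (Fin (n + 1)))

/-!
Take `x_p = δ e_n` and `r_p = 2δ`. A boundary point `q` in the ball satisfies `|q| < 3δ`, so the
lower `C¹` error `|q| / (3√(1+m²))` is at most `δ / √(1+m²)`. This is compensated by
`-x_p·ν_q = -δ e_n·ν_q ≥ δ / √(1+m²)`, which holds because `|∇φ| ≤ m`.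
-/

noncomputable def EuclideanSpace.snoc {n : ℕ} (a : EuclideanSpace ℝ (Fin n)) (t : ℝ) :
    EuclideanSpace ℝ (Fin (n + 1)) :=
  WithLp.toLp 2 (Fin.snoc (α := fun _ => ℝ) a.ofLp t)

namespace EuclideanSpace

variable {n : ℕ}

@[simp]
lemma snoc_last (a : EuclideanSpace ℝ (Fin n)) (t : ℝ) : snoc a t (Fin.last n) = t := by
  simp [snoc]

@[simp]
lemma toLp_init_snoc (a : EuclideanSpace ℝ (Fin n)) (t : ℝ) :
    WithLp.toLp 2 (Fin.init (snoc a t)) = a := by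
  simp [snoc]

lemma inner_snoc_snoc (a b : EuclideanSpace ℝ (Fin n)) (s t : ℝ) :
    inner ℝ (snoc a s) (snoc b t) = inner ℝ a b + s * t := by
  simp [snoc, PiLp.inner_apply, Fin.sum_univ_castSucc, RCLike.inner_apply, mul_comm]

lemma norm_snoc_zero {t : ℝ} (ht : 0 ≤ t) : ‖snoc (0 : EuclideanSpace ℝ (Fin n)) t‖ = t := by
  simp [EuclideanSpace.norm_eq, snoc, Fin.sum_univ_castSucc, Real.sqrt_sq ht]

end EuclideanSpace

open EuclideanSpace

lemma graphNormal_eq_smul_snoc {n : ℕ} (φ : EuclideanSpace ℝ (Fin n) → ℝ)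
    (x' : EuclideanSpace ℝ (Fin n)) :
    graphNormal φ x' = (√(1 + ‖gradient φ x'‖ ^ 2))⁻¹ • snoc (gradient φ x') (-1) :=
  rfl

lemma norm_gradient_le_of_lipschitzWith {n : ℕ} {m : NNReal}
    {φ : EuclideanSpace ℝ (Fin n) → ℝ} (hφ : LipschitzWith m φ) (x' : EuclideanSpace ℝ (Fin n)) :
    ‖gradient φ x'‖ ≤ m := by
  rw [gradient, LinearIsometryEquiv.norm_map]
  exact norm_fderiv_le_of_lipschitz ℝ hφ

lemma inner_snoc_zero_graphNormal_le {n : ℕ} {m : NNReal} {φ : EuclideanSpace ℝ (Fin n) → ℝ}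
    (hφ : LipschitzWith m φ) (x' : EuclideanSpace ℝ (Fin n)) {t : ℝ} (ht : 0 ≤ t) :
    inner ℝ (snoc 0 t) (graphNormal φ x') ≤ -(t / √(1 + (m : ℝ) ^ 2)) := by
  have hgrad := norm_gradient_le_of_lipschitzWith hφ x'
  have hsqrt : √(1 + ‖gradient φ x'‖ ^ 2) ≤ √(1 + (m : ℝ) ^ 2) := by
    gcongr
  rw [graphNormal_eq_smul_snoc, real_inner_smul_right, inner_snoc_snoc, inner_zero_left,
    zero_add, mul_neg_one, mul_neg, neg_le_neg_iff, inv_mul_eq_div]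
  gcongr

lemma inner_sub_nonneg_of_near_center {E : Type*} [NormedAddCommGroup E] [InnerProductSpace ℝ E]
    {q x ν : E} {δ S : ℝ} (hS : 0 < S) (hx : ‖x‖ = δ) (hqx : ‖q - x‖ < 2 * δ)
    (hxν : inner ℝ x ν ≤ -(δ / S)) (hqν : -((3 * S)⁻¹ * ‖q‖) ≤ inner ℝ q ν) :
    0 ≤ inner ℝ (q - x) ν := by
  have hq : ‖q‖ < 3 * δ := by
    linarith [norm_le_norm_sub_add q x]
  have hqS : (3 * S)⁻¹ * ‖q‖ ≤ δ / S := by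
    calc (3 * S)⁻¹ * ‖q‖ ≤ (3 * S)⁻¹ * (3 * δ) := by gcongr
      _ = δ / S := by field_simp
  rw [inner_sub_left]
  linarith

theorem stmt_15_general {n : ℕ} (Ω : Set (EuclideanSpace ℝ (Fin (n + 1))))
    (m : NNReal) (φ : EuclideanSpace ℝ (Fin n) → ℝ)
    (hφlip : LipschitzWith m φ) (hφ0 : φ 0 = 0)
    (ϱ : ℝ) (hϱ : 0 < ϱ)
    (hgraph : ∀ x : EuclideanSpace ℝ (Fin (n + 1)), ‖x‖ < ϱ →
      ((x ∈ Ω ↔ φ (WithLp.toLp 2 (Fin.init x)) < x (Fin.last n)) ∧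
       (x ∈ frontier Ω ↔ x (Fin.last n) = φ (WithLp.toLp 2 (Fin.init x)))))
    (hlowerC1 : ∀ ε : ℝ, 0 < ε → ∃ s : ℝ, 0 < s ∧
      ∀ x' : EuclideanSpace ℝ (Fin n), DifferentiableAt ℝ φ x' →
        ‖graphPt φ x'‖ < s →
        -(ε * ‖graphPt φ x'‖) ≤ (inner ℝ (graphPt φ x') (graphNormal φ x') : ℝ)) :
    ∃ xp ∈ Ω, ∃ rp : ℝ, 0 < rp ∧ ‖(0 : EuclideanSpace ℝ (Fin (n + 1))) - xp‖ < rp ∧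
      ∀ x' : EuclideanSpace ℝ (Fin n), DifferentiableAt ℝ φ x' →
        graphPt φ x' ∈ Metric.ball xp rp →
        0 ≤ (inner ℝ (graphPt φ x' - xp) (graphNormal φ x') : ℝ) := by
  set S := √(1 + (m : ℝ) ^ 2)
  have hS : 0 < S := by positivity
  obtain ⟨s, hs, hlower⟩ := hlowerC1 (3 * S)⁻¹ (by positivity)
  set δ := min (ϱ / 2) (s / 3)
  have hδ : 0 < δ := lt_min (by linarith) (by linarith)
  have hxp : ‖snoc (0 : EuclideanSpace ℝ (Fin n)) δ‖ = δ := norm_snoc_zero hδ.le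
  have hxpΩ : snoc 0 δ ∈ Ω := by
    rw [(hgraph _ (by linarith [min_le_left (ϱ / 2) (s / 3)])).1, toLp_init_snoc, snoc_last, hφ0]
    exact hδ
  refine ⟨snoc 0 δ, hxpΩ, 2 * δ, by linarith, by rwa [zero_sub, norm_neg, hxp, two_mul,
    lt_add_iff_pos_left], fun x' hdiff hball => ?_⟩
  rw [Metric.mem_ball, dist_eq_norm] at hball
  have hq : ‖graphPt φ x'‖ < s := by
    linarith [norm_le_norm_sub_add (graphPt φ x') (snoc 0 δ), min_le_right (ϱ / 2) (s / 3)]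
  exact inner_sub_nonneg_of_near_center hS hxp hball
    (inner_snoc_zero_graphNormal_le hφlip x' hδ.le) (hlower x' hdiff hq)

/-- Theorem 3.8: a Lipschitz-graph domain satisfying the lower `C¹`
condition at a boundary point `p = 0` is star-shaped in some ball around a
nearby interior point `x_p`. -/
theorem stmt_15 {n : ℕ} (Ω : Set (EuclideanSpace ℝ (Fin (n + 1))))
    (hΩopen : IsOpen Ω) (hΩbdd : Bornology.IsBounded Ω)
    (m : NNReal) (φ : EuclideanSpace ℝ (Fin n) → ℝ)
    (hφlip : LipschitzWith m φ) (hφ0 : φ 0 = 0)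
    (hp : (0 : EuclideanSpace ℝ (Fin (n + 1))) ∈ frontier Ω)
    (ϱ : ℝ) (hϱ : 0 < ϱ)
    (hgraph : ∀ x : EuclideanSpace ℝ (Fin (n + 1)), ‖x‖ < ϱ →
      ((x ∈ Ω ↔ φ (WithLp.toLp 2 (Fin.init x)) < x (Fin.last n)) ∧
       (x ∈ frontier Ω ↔ x (Fin.last n) = φ (WithLp.toLp 2 (Fin.init x)))))
    (hlowerC1 : ∀ ε : ℝ, 0 < ε → ∃ s : ℝ, 0 < s ∧
      ∀ x' : EuclideanSpace ℝ (Fin n), DifferentiableAt ℝ φ x' →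
        ‖graphPt φ x'‖ < s →
        -(ε * ‖graphPt φ x'‖) ≤ (inner ℝ (graphPt φ x') (graphNormal φ x') : ℝ)) :
    ∃ xp ∈ Ω, ∃ rp : ℝ, 0 < rp ∧ ‖(0 : EuclideanSpace ℝ (Fin (n + 1))) - xp‖ < rp ∧
      ∀ x' : EuclideanSpace ℝ (Fin n), DifferentiableAt ℝ φ x' →
        graphPt φ x' ∈ Metric.ball xp rp →
        0 ≤ (inner ℝ (graphPt φ x' - xp) (graphNormal φ x') : ℝ) :=
  stmt_15_general Ω m φ hφlip hφ0 ϱ hϱ hgraph hlowerC1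
end
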